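/- arXiv:2409.06199 — 8 statements merged into one kernel-verified Lean document; each statement's English description precedes it below -/
import Mathlib

section
/- (Steady algorithm gap size upper bound.) Let ŝ ∈ ℕ with ŝ ≥ 2, set S = 2^ŝ, and let T ∈ ℕ with T ≥ S. Let t = ⌊log₂ T⌋ − ŝ + 1 (the current epoch). Suppose B ⊆ {0,…,T−1} contains every index T̆ < T with hanoi value H(T̆) ≥ t (the retention invariant maintained by the steady curation algorithm). Then for every gap, i.e., every a, L ∈ ℕ with a + L ≤ T and {a,…,a+L−1} ∩ B = ∅, one has L ≤ 2^t − 1 and, as rational numbers, L ≤ 2·((S+1)/S)·⌊T/(S+1)⌋ + 1. That is, the steady cost satisfies cost_steady(T) ≤ 2·((S+1)/S)·ĝ + 1 where ĝ = ⌊T/(S+1)⌋ is the optimal lower bound on maximum gap size. -/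
/-!
Among any `2^t` consecutive integers there is an `x` with `2^t ∣ x + 1`, i.e. of hanoi value at
least `t`; such an `x` is retained, so every gap is shorter than `2^t`. For the second bound,
`2^t · S = 2^(⌊log₂ T⌋ + 1) ≤ 2T`, and `T ≤ (S + 1)⌊T/(S+1)⌋ + S`.
-/

theorem Nat.exists_mem_Ico_dvd_succ {m : ℕ} (hm : 0 < m) (a : ℕ) :
    ∃ x ∈ Finset.Ico a (a + m), m ∣ x + 1 := by
  refine ⟨m * (a / m) + (m - 1), ?_, a / m + 1, by rw [mul_add]; omega⟩
  have hdiv := Nat.div_add_mod a m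
  have hmod := Nat.mod_lt a hm
  rw [Finset.mem_Ico]
  omega

theorem gap_length_lt_of_dvd_succ_mem {m T a L : ℕ} {B : Finset ℕ} (hm : 0 < m)
    (hret : ∀ x < T, m ∣ x + 1 → x ∈ B) (haL : a + L ≤ T)
    (hgap : ∀ x ∈ Finset.Ico a (a + L), x ∉ B) : L < m := by
  by_contra! hmL
  obtain ⟨x, hx, hdvd⟩ := Nat.exists_mem_Ico_dvd_succ hm a
  rw [Finset.mem_Ico] at hx
  exact hgap x (Finset.mem_Ico.mpr ⟨hx.1, by omega⟩) (hret x (by omega) hdvd)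

theorem two_pow_log_sub_add_one_mul_le {s T : ℕ} (h : 2 ^ s ≤ T) :
    2 ^ (Nat.log 2 T - s + 1) * 2 ^ s ≤ 2 * T := by
  have hs : s ≤ Nat.log 2 T := Nat.le_log_of_pow_le one_lt_two h
  rw [← pow_add, show Nat.log 2 T - s + 1 + s = Nat.log 2 T + 1 by omega, pow_succ, mul_comm]
  have hT : T ≠ 0 := Nat.one_le_iff_ne_zero.mp (Nat.one_le_two_pow.trans h)
  exact Nat.mul_le_mul_left 2 (Nat.pow_log_le_self 2 hT)

theorem Nat.cast_le_two_mul_succ_div_mul_add_one {L S g : ℕ} (hS : 0 < S)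
    (h : L * S ≤ 2 * (S + 1) * g + S) :
    (L : ℚ) ≤ 2 * (((S : ℚ) + 1) / S) * g + 1 := by
  have hSq : (0 : ℚ) < S := by exact_mod_cast hS
  rw [show 2 * (((S : ℚ) + 1) / S) * g + 1 = (2 * ((S : ℚ) + 1) * g + S) / S by field_simp,
    le_div_iff₀ hSq]
  exact_mod_cast h

theorem steady_gap_size_upper_bound_general (s' S T t : ℕ)
    (hS : S = 2 ^ s') (hT : S ≤ T) (ht : t = Nat.log 2 T - s' + 1)
    (B : Finset ℕ)
    (hret : ∀ T' < T, t ≤ padicValNat 2 (T' + 1) → T' ∈ B) :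
    ∀ a L : ℕ, a + L ≤ T → (∀ x ∈ Finset.Ico a (a + L), x ∉ B) →
      L ≤ 2 ^ t - 1 ∧
      (L : ℚ) ≤ 2 * (((S : ℚ) + 1) / (S : ℚ)) * ((T / (S + 1) : ℕ) : ℚ) + 1 := by
  intro a L haL hgap
  have hlt : L < 2 ^ t := gap_length_lt_of_dvd_succ_mem (by positivity)
    (fun x hx hdvd => hret x hx ((padicValNat_dvd_iff_le x.succ_ne_zero).mp hdvd)) haL hgap
  refine ⟨by omega, ?_⟩
  have hepoch : 2 ^ t * S ≤ 2 * T := by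
    subst hS ht
    exact two_pow_log_sub_add_one_mul_le hT
  have hfloor : T ≤ (S + 1) * (T / (S + 1)) + S := by
    have := Nat.lt_div_mul_add (a := T) (Nat.succ_pos S)
    linarith
  have hgapS : (L + 1) * S ≤ 2 ^ t * S := Nat.mul_le_mul_right S hlt
  exact Nat.cast_le_two_mul_succ_div_mul_add_one (hS ▸ by positivity) (by nlinarith)

/-- steady algorithm gap size upper bound. With `S = 2^s'`, `T ≥ S`,
epoch `t = ⌊log₂ T⌋ − s' + 1`, and all items of hanoi value `≥ t` retained,
every gap has size `L ≤ 2^t − 1` and (as rationals)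
`L ≤ 2·((S+1)/S)·⌊T/(S+1)⌋ + 1`. -/
theorem steady_gap_size_upper_bound (s' S T t : ℕ) (hs' : 2 ≤ s')
    (hS : S = 2 ^ s') (hT : S ≤ T) (ht : t = Nat.log 2 T - s' + 1)
    (B : Finset ℕ) (hB : B ⊆ Finset.range T)
    (hret : ∀ T' < T, t ≤ padicValNat 2 (T' + 1) → T' ∈ B) :
    ∀ a L : ℕ, a + L ≤ T → (∀ x ∈ Finset.Ico a (a + L), x ∉ B) →
      L ≤ 2 ^ t - 1 ∧
      (L : ℚ) ≤ 2 * (((S : ℚ) + 1) / (S : ℚ)) * ((T / (S + 1) : ℕ) : ℚ) + 1 :=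
  steady_gap_size_upper_bound_general s' S T t hS hT ht B hret
end

section
/- (Space required to store goal_stretched.) Let ŝ, τ, t, T ∈ ℕ with ŝ ≥ 2, τ ≤ ŝ − 1, t ≤ 2^(τ+1) − τ − 2, and T ≤ 2^(ŝ+t). Set n = 2^(ŝ−1−τ). Then the set consisting, for each hanoi value h, of the first n indices with hanoi value h that are below T has at most 2^ŝ elements. Equivalently, |{T̆ ∈ {0,…,T−1} : ⌊T̆ / 2^(H(T̆)+1)⌋ < n}| ≤ 2^ŝ, where ⌊T̆ / 2^(H(T̆)+1)⌋ is the number of earlier indices sharing hanoi value H(T̆); equivalently, |⋃_{h ∈ ℕ} {i·2^(h+1) + 2^h − 1 : i < n} ∩ {0,…,T−1}| ≤ 2^ŝ. -/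
/-!
Write `v(x) = padicValNat 2 (x + 1)` and `K = t + τ + 1`, so that `T ≤ n * 2 ^ K`. Every `x`
with `v(x) = h` satisfies `x ≡ 2 ^ h - 1 [MOD 2 ^ (h + 1)]`, so `x / 2 ^ (h + 1)` determines `x`:
each hanoi value `h < K` contributes at most `n` indices. The indices with `v(x) ≥ K` are those
with `2 ^ K ∣ x + 1`, of which there are `T / 2 ^ K ≤ n` below `T`. Hence the set has at most
`(K + 1) * n ≤ 2 ^ (τ + 1) * n = 2 ^ s'` elements, using `t + τ + 2 ≤ 2 ^ (τ + 1)`.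
-/

open Finset

theorem mod_two_pow_succ_padicValNat {m : ℕ} (hm : m ≠ 0) :
    m % 2 ^ (padicValNat 2 m + 1) = 2 ^ padicValNat 2 m := by
  set v := padicValNat 2 m
  obtain ⟨c, hmc⟩ : 2 ^ v ∣ m := pow_padicValNat_dvd
  have hc : c % 2 = 1 := by
    refine Nat.mod_two_ne_zero.mp fun hc => pow_succ_padicValNat_not_dvd (p := 2) hm ?_
    have : 2 ^ v * 2 ∣ m := hmc ▸ Nat.mul_dvd_mul_left _ (Nat.dvd_of_mod_eq_zero hc)
    rwa [pow_succ]
  rw [pow_succ, hmc, Nat.mul_mod_mul_left, hc, mul_one]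

theorem injOn_div_two_pow_succ_padicValNat (h : ℕ) :
    Set.InjOn (fun x => x / 2 ^ (h + 1)) {x | padicValNat 2 (x + 1) = h} := by
  intro a ha b hb hab
  refine Nat.ext_div_modEq hab (Nat.ModEq.add_right_cancel' 1 ?_)
  have hmod {x : ℕ} (hx : padicValNat 2 (x + 1) = h) : (x + 1) % 2 ^ (h + 1) = 2 ^ h :=
    hx ▸ mod_two_pow_succ_padicValNat x.succ_ne_zero
  exact (hmod ha).trans (hmod hb).symm

theorem card_filter_padicValNat_eq_div_lt_le (T n h : ℕ) :
    #{x ∈ range T | padicValNat 2 (x + 1) = h ∧ x / 2 ^ (h + 1) < n} ≤ n := by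
  simpa using card_le_card_of_injOn (t := range n) (fun x => x / 2 ^ (h + 1))
    (fun x hx => by simp_all) fun a ha b hb => by
      simp only [coe_filter, Set.mem_ofPred_eq] at ha hb
      exact injOn_div_two_pow_succ_padicValNat h ha.2.1 hb.2.1

theorem card_filter_le_padicValNat_le (T K : ℕ) :
    #{x ∈ range T | K ≤ padicValNat 2 (x + 1)} ≤ T / 2 ^ K := by
  rw [← Nat.card_multiples]
  refine card_le_card (monotone_filter_right _ fun x _ hx => ?_)
  exact (padicValNat_dvd_iff_le x.succ_ne_zero).mpr hx

theorem card_filter_div_two_pow_succ_padicValNat_lt_le (T n K : ℕ) :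
    #{x ∈ range T | x / 2 ^ (padicValNat 2 (x + 1) + 1) < n} ≤ K * n + T / 2 ^ K := by
  set S := {x ∈ range T | x / 2 ^ (padicValNat 2 (x + 1) + 1) < n}
  have hlow : {x ∈ S | padicValNat 2 (x + 1) < K} ⊆ (range K).biUnion
      fun h => {x ∈ range T | padicValNat 2 (x + 1) = h ∧ x / 2 ^ (h + 1) < n} := by
    intro x hx
    simp only [S, mem_filter, mem_range, mem_biUnion] at hx ⊢
    exact ⟨_, hx.2, hx.1.1, rfl, hx.1.2⟩
  have hhigh : {x ∈ S | ¬padicValNat 2 (x + 1) < K} ⊆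
      {x ∈ range T | K ≤ padicValNat 2 (x + 1)} := by
    intro x hx
    simp only [S, mem_filter, not_lt] at hx ⊢
    exact ⟨hx.1.1, hx.2⟩
  calc #S = #{x ∈ S | padicValNat 2 (x + 1) < K} + #{x ∈ S | ¬padicValNat 2 (x + 1) < K} :=
        (card_filter_add_card_filter_not _).symm
    _ ≤ ∑ h ∈ range K, #{x ∈ range T | padicValNat 2 (x + 1) = h ∧ x / 2 ^ (h + 1) < n} +
        #{x ∈ range T | K ≤ padicValNat 2 (x + 1)} :=
      add_le_add ((card_le_card hlow).trans card_biUnion_le) (card_le_card hhigh)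
    _ ≤ ∑ _h ∈ range K, n + T / 2 ^ K :=
      add_le_add (sum_le_sum fun h _ => card_filter_padicValNat_eq_div_lt_le T n h)
        (card_filter_le_padicValNat_le T K)
    _ = K * n + T / 2 ^ K := by rw [sum_const, card_range, smul_eq_mul]

/-- space required to store `goal_stretched`. With
`n = 2^(s'−1−τ)`, the set of the first `n` indices of each hanoi value below
`T ≤ 2^(s'+t)` has at most `2^s'` elements. An index `T'` is among the first `n`
of its hanoi value iff `⌊T' / 2^(H(T')+1)⌋ < n`. -/
theorem goal_stretched_space (s' τ t T n : ℕ) (hs' : 2 ≤ s') (hτ : τ ≤ s' - 1)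
    (ht : t ≤ 2 ^ (τ + 1) - τ - 2) (hT : T ≤ 2 ^ (s' + t))
    (hn : n = 2 ^ (s' - 1 - τ)) :
    ((Finset.range T).filter
      fun T' => T' / 2 ^ (padicValNat 2 (T' + 1) + 1) < n).card ≤ 2 ^ s' := by
  have hsplit : 2 ^ (s' + t) = n * 2 ^ (t + τ + 1) := by
    rw [hn, ← pow_add]
    congr 1
    omega
  have hτ2 : τ + 2 ≤ 2 ^ (τ + 1) := Nat.lt_two_pow_self
  calc _ ≤ (t + τ + 1) * n + T / 2 ^ (t + τ + 1) :=
        card_filter_div_two_pow_succ_padicValNat_lt_le T n (t + τ + 1)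
    _ ≤ (t + τ + 1) * n + n := by
        gcongr
        exact Nat.div_le_of_le_mul (by rw [mul_comm]; omega)
    _ ≤ 2 ^ (τ + 1) * n := by rw [← add_one_mul]; gcongr; omega
    _ = 2 ^ s' := by rw [hn, ← pow_add]; congr 1; omega
end

section
/- (Stretched algorithm retained data items.) For every n ∈ ℕ with n ≥ 1, the following two subsets of ℕ are equal: {i·2^(h+1) + 2^h − 1 : i, h ∈ ℕ, i ≤ n−1} (the first n indices of each hanoi value h) and {j·2^h − 1 : j, h ∈ ℕ, 1 ≤ j ≤ 2n}. -/
/-! Every positive `j` factors as `2 ^ k * (2 * i + 1)`, and then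
`j * 2 ^ h = i * 2 ^ (h + k + 1) + 2 ^ (h + k)`; the odd parts `2 * i + 1 ≤ 2 * n` are exactly
those with `i ≤ n - 1`. -/

theorem two_mul_add_one_mul_two_pow (i h : ℕ) :
    (2 * i + 1) * 2 ^ h = i * 2 ^ (h + 1) + 2 ^ h := by
  ring

theorem exists_mul_two_pow_eq_mul_two_pow_succ_add {j : ℕ} (hj : j ≠ 0) (h : ℕ) :
    ∃ i k : ℕ, 2 * i + 1 ≤ j ∧ j * 2 ^ h = i * 2 ^ (k + 1) + 2 ^ k := by
  obtain ⟨k, m, ⟨i, rfl⟩, rfl⟩ := Nat.exists_eq_two_pow_mul_odd hj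
  refine ⟨i, h + k, Nat.le_mul_of_pos_left _ (Nat.two_pow_pos k), ?_⟩
  rw [← two_mul_add_one_mul_two_pow]
  ring

/-- stretched algorithm retained data items. For `n ≥ 1`, the set
of the first `n` indices of each hanoi value equals
`{j·2^h − 1 : 1 ≤ j ≤ 2n, h ∈ ℕ}`. -/
theorem stretched_retained_equivalence (n : ℕ) (hn : 1 ≤ n) :
    {x : ℕ | ∃ i h : ℕ, i ≤ n - 1 ∧ x = i * 2 ^ (h + 1) + 2 ^ h - 1} =
    {x : ℕ | ∃ j h : ℕ, 1 ≤ j ∧ j ≤ 2 * n ∧ x = j * 2 ^ h - 1} := by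
  ext x
  constructor
  · rintro ⟨i, h, hi, rfl⟩
    exact ⟨2 * i + 1, h, by omega, by omega, by rw [two_mul_add_one_mul_two_pow]⟩
  · rintro ⟨j, h, hj, hj_le, rfl⟩
    obtain ⟨i, k, hij, hjk⟩ := exists_mul_two_pow_eq_mul_two_pow_succ_add (by omega : j ≠ 0) h
    exact ⟨i, k, by omega, by rw [hjk]⟩
end

section
/- (Stretched gap size ratio given first n items per hanoi value.) Let n, T ∈ ℕ with n ≥ 1, let W = {j·2^h − 1 : j, h ∈ ℕ, 1 ≤ j ≤ 2n}, and let B ⊆ {0,…,T−1} contain every element of W that is less than T. Then for every T̆ with 1 ≤ T̆ < T and all i, j ∈ ℕ with i ≤ T̆, T̆ + j ≤ T, and {T̆−i, …, T̆+j−1} ∩ B = ∅, we have n·(i + j) ≤ T̆. That is, the gap size ratio satisfies G_T(T̆)/T̆ ≤ 1/n for all T̆ ∈ [1, T). -/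
/-! Let the gap be `[a, a + L)` with `a = T' - i` and `L = i + j`, and suppose `a ≤ T' < n L`.
With `2^h ≤ L < 2^(h+1)`, the gap has length at least `2^h`, so it contains the number
`(q + 1)·2^h - 1` with `q = ⌊a / 2^h⌋`; and `a < n L < 2n·2^h` gives `q + 1 ≤ 2n`.
That number is retained, contradicting the gap. -/

/-- The first `n` indices of every hanoi value, i.e. the set `W` of the paper. -/
def firstHanoiItems (n : ℕ) : Set ℕ :=
  {x | ∃ j h : ℕ, 1 ≤ j ∧ j ≤ 2 * n ∧ x = j * 2 ^ h - 1}

lemma div_add_one_mul_sub_one_mem_Ico (a : ℕ) {d : ℕ} (hd : 0 < d) :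
    (a / d + 1) * d - 1 ∈ Finset.Ico a (a + d) := by
  have hdiv : d * (a / d) + a % d = a := Nat.div_add_mod a d
  have hmod : a % d < d := Nat.mod_lt a hd
  have hexpand : (a / d + 1) * d = d * (a / d) + d := by ring
  rw [Finset.mem_Ico, hexpand]
  omega

lemma exists_mem_firstHanoiItems_Ico {n a L : ℕ} (ha : a < n * L) :
    ∃ x ∈ firstHanoiItems n, x ∈ Finset.Ico a (a + L) := by
  have hL : L ≠ 0 := by
    rintro rfl
    simp at ha
  set h := Nat.log 2 L
  have hpos : 0 < 2 ^ h := by positivity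
  have hle : 2 ^ h ≤ L := Nat.pow_log_le_self 2 hL
  have hlt : L < 2 * 2 ^ h := by
    rw [← pow_succ']
    exact Nat.lt_pow_succ_log_self one_lt_two L
  have hq : a / 2 ^ h < 2 * n := by
    rw [Nat.div_lt_iff_lt_mul hpos]
    calc a < n * L := ha
      _ ≤ n * (2 * 2 ^ h) := Nat.mul_le_mul_left n hlt.le
      _ = 2 * n * 2 ^ h := by ring
  refine ⟨(a / 2 ^ h + 1) * 2 ^ h - 1, ⟨a / 2 ^ h + 1, h, le_add_self, hq, rfl⟩, ?_⟩
  have hmem := div_add_one_mul_sub_one_mem_Ico a hpos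
  rw [Finset.mem_Ico] at hmem ⊢
  omega

theorem stretched_gap_size_ratio_general (n T : ℕ)
    (B : Finset ℕ)
    (hret : ∀ x : ℕ,
      (∃ j h : ℕ, 1 ≤ j ∧ j ≤ 2 * n ∧ x = j * 2 ^ h - 1) → x < T → x ∈ B) :
    ∀ T', 1 ≤ T' → T' < T → ∀ i j : ℕ, i ≤ T' → T' + j ≤ T →
      (∀ x ∈ Finset.Ico (T' - i) (T' + j), x ∉ B) → n * (i + j) ≤ T' := by
  intro T' _ _ i j hi hj hgap
  by_contra! hlong
  obtain ⟨x, hxW, hx⟩ :=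
    exists_mem_firstHanoiItems_Ico (a := T' - i) (lt_of_le_of_lt (Nat.sub_le T' i) hlong)
  have hend : T' - i + (i + j) = T' + j := by omega
  rw [hend] at hx
  have hxT : x < T := lt_of_lt_of_le (Finset.mem_Ico.mp hx).2 hj
  exact hgap x hx (hret x hxW hxT)

/-- stretched gap size ratio given first `n` items per hanoi
value. If `B` retains every `j·2^h − 1 < T` with `1 ≤ j ≤ 2n`, then every gap
`[T'−i, T'+j)` around any `1 ≤ T' < T` satisfies `n·(i+j) ≤ T'`, i.e. the gap
size ratio is at most `1/n`. -/
theorem stretched_gap_size_ratio (n T : ℕ) (hn : 1 ≤ n)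
    (B : Finset ℕ) (hB : B ⊆ Finset.range T)
    (hret : ∀ x : ℕ,
      (∃ j h : ℕ, 1 ≤ j ∧ j ≤ 2 * n ∧ x = j * 2 ^ h - 1) → x < T → x ∈ B) :
    ∀ T', 1 ≤ T' → T' < T → ∀ i j : ℕ, i ≤ T' → T' + j ≤ T →
      (∀ x ∈ Finset.Ico (T' - i) (T' + j), x ∉ B) → n * (i + j) ≤ T' :=
  stretched_gap_size_ratio_general n T B hret
end

section
/- (Tilted algorithm retained data items.) Let T ∈ ℕ and n ∈ ℕ with n ≥ 1. Working in ℤ with floor division ⌊·/·⌋, define A = {2^(h+1)·(⌊(T − 2^h)/2^(h+1)⌋ − j) + 2^h − 1 : h ∈ ℕ, j ∈ ℕ, j ≤ n−1} (the most recent n indices of each hanoi value before time T) and C = {2^h·(⌊T/2^h⌋ − j') − 1 : h ∈ ℕ, j' ∈ ℕ, j' ≤ 2n−1}. Then A ⊆ C, and every nonnegative element of C belongs to A; in particular A ∩ {x ∈ ℤ : x ≥ 0} = C ∩ {x ∈ ℤ : x ≥ 0}. -/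
/-!
Write `m_h = ⌊T/2^h⌋`. Since `⌊(T - 2^h)/2^(h+1)⌋ = ⌊(m_h - 1)/2⌋`, the elements of `A` of
hanoi value `h` are the numbers `2^h·k - 1` with `k` odd among the last `2n` integers up to
`m_h`, while `C` drops the parity condition. Conversely, writing `k = 2^e·k'` with `k'` odd
turns `2^h·k - 1 ∈ C` (for `k > 0`) into `2^(h+e)·k' - 1`, and `k'` is again among the last
`2n` integers up to `m_(h+e) = ⌊m_h/2^e⌋`.
-/

def hanoiWindow (t : ℤ) (w : ℕ) : Set ℤ :=
  {x | ∃ (h : ℕ) (k : ℤ), Odd k ∧ t / 2 ^ h - w < k ∧ k ≤ t / 2 ^ h ∧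
    x = 2 ^ h * k - 1}

def dyadicWindow (t : ℤ) (w : ℕ) : Set ℤ :=
  {x | ∃ (h : ℕ) (k : ℤ), t / 2 ^ h - w < k ∧ k ≤ t / 2 ^ h ∧ x = 2 ^ h * k - 1}

theorem hanoiWindow_subset_dyadicWindow (t : ℤ) (w : ℕ) :
    hanoiWindow t w ⊆ dyadicWindow t w := by
  rintro x ⟨h, k, -, hk⟩
  exact ⟨h, k, hk⟩

theorem Int.fdiv_sub_two_pow (t : ℤ) (h : ℕ) :
    (t - 2 ^ h).fdiv (2 ^ (h + 1)) = (t / 2 ^ h - 1) / 2 := by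
  have hsub : (t - 2 ^ h) / 2 ^ h = t / 2 ^ h - 1 := by
    simpa using Int.sub_mul_ediv_right t 1 (pow_ne_zero h two_ne_zero)
  rw [Int.fdiv_eq_ediv_of_nonneg _ (by positivity), pow_succ,
    ← Int.ediv_ediv_of_nonneg (by positivity), hsub]

theorem odd_mem_window_iff (m k : ℤ) (n : ℕ) :
    Odd k ∧ m - ↑(2 * n) < k ∧ k ≤ m ↔
      ∃ j : ℕ, j < n ∧ k = 2 * ((m - 1) / 2 - j) + 1 := by
  constructor
  · rintro ⟨⟨i, rfl⟩, hlo, hhi⟩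
    exact ⟨((m - 1) / 2 - i).toNat, by omega, by omega⟩
  · rintro ⟨j, hj, rfl⟩
    exact ⟨⟨_, rfl⟩, by omega, by omega⟩

theorem mem_window_iff (m k : ℤ) (w : ℕ) :
    m - w < k ∧ k ≤ m ↔ ∃ j : ℕ, j < w ∧ k = m - j := by
  constructor
  · rintro ⟨hlo, hhi⟩
    exact ⟨(m - k).toNat, by omega, by omega⟩
  · rintro ⟨j, hj, rfl⟩
    omega

theorem hanoiWindow_eq (t : ℤ) {n : ℕ} (hn : 1 ≤ n) :
    hanoiWindow t (2 * n) = {x : ℤ | ∃ h j : ℕ, j ≤ n - 1 ∧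
      x = 2 ^ (h + 1) * (Int.fdiv (t - 2 ^ h) (2 ^ (h + 1)) - (j : ℤ)) + 2 ^ h - 1} := by
  ext x
  simp only [hanoiWindow, Set.mem_ofPred_eq, Int.fdiv_sub_two_pow]
  constructor
  · rintro ⟨h, k, hk, hlo, hhi, rfl⟩
    obtain ⟨j, hj, rfl⟩ := (odd_mem_window_iff _ k n).1 ⟨hk, hlo, hhi⟩
    exact ⟨h, j, by omega, by ring⟩
  · rintro ⟨h, j, hj, rfl⟩
    obtain ⟨hk, hlo, hhi⟩ := (odd_mem_window_iff (t / 2 ^ h) _ n).2 ⟨j, by omega, rfl⟩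
    exact ⟨h, _, hk, hlo, hhi, by ring⟩

theorem dyadicWindow_eq (t : ℤ) {n : ℕ} (hn : 1 ≤ n) :
    dyadicWindow t (2 * n) = {x : ℤ | ∃ h j' : ℕ, j' ≤ 2 * n - 1 ∧
      x = 2 ^ h * (Int.fdiv t (2 ^ h) - (j' : ℤ)) - 1} := by
  ext x
  simp only [dyadicWindow, Set.mem_ofPred_eq,
    Int.fdiv_eq_ediv_of_nonneg _ (by positivity : (0 : ℤ) ≤ 2 ^ _)]
  constructor
  · rintro ⟨h, k, hlo, hhi, rfl⟩
    obtain ⟨j, hj, rfl⟩ := (mem_window_iff _ k _).1 ⟨hlo, hhi⟩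
    exact ⟨h, j, by omega, rfl⟩
  · rintro ⟨h, j, hj, rfl⟩
    obtain ⟨hlo, hhi⟩ := (mem_window_iff (t / 2 ^ h) _ (2 * n)).2 ⟨j, by omega, rfl⟩
    exact ⟨h, _, hlo, hhi, rfl⟩

theorem mem_window_ediv {m k d : ℤ} {w : ℕ} (hd : 0 < d) (hlo : m - w < d * k)
    (hhi : d * k ≤ m) :
    m / d - w < k ∧ k ≤ m / d := by
  have hdiv : m / d * d ≤ m := Int.ediv_mul_le m hd.ne'
  refine ⟨?_, (Int.le_ediv_iff_mul_le hd).2 (by linarith)⟩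
  by_contra! hk
  nlinarith

theorem mem_hanoiWindow_of_mem_dyadicWindow {t : ℤ} {w : ℕ} {x : ℤ}
    (hx : x ∈ dyadicWindow t w) (hx0 : 0 ≤ x) : x ∈ hanoiWindow t w := by
  obtain ⟨h, k, hlo, hhi, rfl⟩ := hx
  have hk : 0 < k := by
    by_contra! hk
    nlinarith [pow_pos (two_pos : (0 : ℤ) < 2) h]
  lift k to ℕ using hk.le
  obtain ⟨e, k', hodd, rfl⟩ := Nat.exists_eq_two_pow_mul_odd (by omega : k ≠ 0)
  have hdiv : t / 2 ^ (h + e) = t / 2 ^ h / 2 ^ e := by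
    rw [pow_add, Int.ediv_ediv_of_nonneg (by positivity)]
  push_cast at hlo hhi
  obtain ⟨hlo', hhi'⟩ := mem_window_ediv (by positivity) hlo hhi
  exact ⟨h + e, k', by exact_mod_cast hodd, hdiv ▸ hlo', hdiv ▸ hhi', by push_cast; ring⟩

/-- tilted algorithm retained data items. With floor division
`Int.fdiv`, the set `A` of the most recent `n` indices of each hanoi value
before time `T` and the set `C = {2^h·(⌊T/2^h⌋ − j') − 1 : j' ≤ 2n−1}` satisfy
`A ⊆ C`, every nonnegative element of `C` lies in `A`, and their nonnegative
parts coincide. -/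
theorem tilted_retained_equivalence (T n : ℕ) (hn : 1 ≤ n) (A C : Set ℤ)
    (hA : A = {x : ℤ | ∃ h j : ℕ, j ≤ n - 1 ∧
      x = 2 ^ (h + 1) * (Int.fdiv ((T : ℤ) - 2 ^ h) (2 ^ (h + 1)) - (j : ℤ))
        + 2 ^ h - 1})
    (hC : C = {x : ℤ | ∃ h j' : ℕ, j' ≤ 2 * n - 1 ∧
      x = 2 ^ h * (Int.fdiv (T : ℤ) (2 ^ h) - (j' : ℤ)) - 1}) :
    A ⊆ C ∧ (∀ x ∈ C, 0 ≤ x → x ∈ A) ∧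
      A ∩ {x : ℤ | 0 ≤ x} = C ∩ {x : ℤ | 0 ≤ x} := by
  rw [← hanoiWindow_eq T hn] at hA
  rw [← dyadicWindow_eq T hn] at hC
  subst hA hC
  refine ⟨hanoiWindow_subset_dyadicWindow _ _, fun _ => mem_hanoiWindow_of_mem_dyadicWindow, ?_⟩
  ext x
  exact ⟨fun ⟨hx, hx0⟩ => ⟨hanoiWindow_subset_dyadicWindow _ _ hx, hx0⟩,
    fun ⟨hx, hx0⟩ => ⟨mem_hanoiWindow_of_mem_dyadicWindow hx hx0, hx0⟩⟩
end

section
/- (Tilted gap size ratio given last n items per hanoi value.) Let n, T ∈ ℕ with n ≥ 1 and T ≥ 2. Let V = {x ∈ ℕ : x < T and there exist h ∈ ℕ and j' ∈ ℕ with j' ≤ 2n−1 such that (x : ℤ) = 2^h·(⌊T/2^h⌋ − j') − 1}, and let B ⊆ {0,…,T−1} with V ⊆ B. Then for every T̆ with T̆ < T − 1 and all i, j ∈ ℕ with i ≤ T̆, T̆ + j ≤ T, and {T̆−i, …, T̆+j−1} ∩ B = ∅, we have, as rationals, (i + j)/(T − 1 − T̆) ≤ 1/(n − 1/2); equivalently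 (2n − 1)·(i + j) ≤ 2·(T − 1 − T̆). That is, the tilted gap size ratio satisfies G_T(T̆)/(T − 1 − T̆) ≤ 1/(n − 1/2) for all T̆ ∈ [0, T−1). -/
/-!
Let `L ≥ 1` be the length of a gap `[a, b)` and `P = 2^h` the largest power of two with
`P ≤ L`. The multiple `P q` with `q = ⌊b / P⌋` satisfies `b - P < P q ≤ b`, so `P q - 1` lies in
the gap. That index is `2^h (⌊T / 2^h⌋ - j') - 1` with `j' = ⌊T / P⌋ - q`, so it escapes the
retained set only if `j' ≥ 2n`, i.e. `P (q + 2n) ≤ T`. Hence at least `(2n - 1) P > (n - 1/2) L`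
indices lie strictly between the gap and `T`.
-/

/-- The set `V`: the `2n` most recent indices of each hanoi value `h` before time `T`. -/
def recentHanoiIndices (n T : ℕ) : Set ℕ :=
  {x : ℕ | x < T ∧ ∃ h j' : ℕ, j' ≤ 2 * n - 1 ∧
    (x : ℤ) = 2 ^ h * (((T / 2 ^ h : ℕ) : ℤ) - (j' : ℤ)) - 1}

lemma exists_two_pow_le_lt_two_mul {L : ℕ} (hL : L ≠ 0) : ∃ h, 2 ^ h ≤ L ∧ L < 2 * 2 ^ h :=
  ⟨Nat.log 2 L, Nat.pow_log_le_self 2 hL, by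
    simpa [pow_succ, mul_comm] using Nat.lt_pow_succ_log_self one_lt_two L⟩

lemma two_pow_mul_add_le_of_notMem_recentHanoiIndices {n T h q : ℕ} (hq : 0 < 2 ^ h * q)
    (hqT : 2 ^ h * q ≤ T) (hx : 2 ^ h * q - 1 ∉ recentHanoiIndices n T) :
    2 ^ h * (q + 2 * n) ≤ T := by
  by_contra hlt
  have hP : 0 < 2 ^ h := Nat.two_pow_pos h
  have hq_le : q ≤ T / 2 ^ h := (Nat.le_div_iff_mul_le hP).2 (by linarith)
  have hdiv_lt : T / 2 ^ h < q + 2 * n := by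
    by_contra! hge
    exact hlt (le_trans (Nat.mul_le_mul_left _ hge) (Nat.mul_div_le T _))
  refine hx ⟨by omega, h, T / 2 ^ h - q, by omega, ?_⟩
  push_cast [Nat.cast_sub hq_le, Nat.cast_sub (show 1 ≤ 2 ^ h * q by omega)]
  ring

lemma two_mul_sub_one_mul_length_le_of_gap {n T a b t : ℕ} (hbT : b ≤ T) (htb : t ≤ b)
    (hgap : ∀ x, a ≤ x → x < b → x ∉ recentHanoiIndices n T) :
    (2 * n - 1) * (b - a) ≤ 2 * (T - 1 - t) := by
  rcases Nat.eq_zero_or_pos (b - a) with hL | hL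
  · simp [hL]
  obtain ⟨h, hPL, hLP⟩ := exists_two_pow_le_lt_two_mul hL.ne'
  set q := b / 2 ^ h
  have hqb : 2 ^ h * q ≤ b := Nat.mul_div_le b _
  have hbq : b < 2 ^ h * q + 2 ^ h := by
    simpa [mul_add_one] using Nat.lt_mul_div_succ b (Nat.two_pow_pos h)
  have hroom : 2 ^ h * (q + 2 * n) ≤ T :=
    two_pow_mul_add_le_of_notMem_recentHanoiIndices (by omega) (by omega)
      (hgap _ (by omega) (by omega))
  have hroom' : (2 * n - 1) * 2 ^ h ≤ T - 1 - t := by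
    rcases Nat.eq_zero_or_pos n with rfl | hn
    · simp
    set m := 2 * n - 1
    have : 2 ^ h * (q + 2 * n) = 2 ^ h * q + 2 ^ h + m * 2 ^ h := by
      rw [show 2 * n = m + 1 by omega]; ring
    omega
  calc (2 * n - 1) * (b - a) ≤ (2 * n - 1) * (2 * 2 ^ h) := Nat.mul_le_mul_left _ hLP.le
    _ = 2 * ((2 * n - 1) * 2 ^ h) := by ring
    _ ≤ 2 * (T - 1 - t) := Nat.mul_le_mul_left _ hroom'

lemma div_le_one_div_sub_half_of_mul_le {n T t L : ℕ} (hn : 1 ≤ n) (htT : t < T - 1)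
    (h : (2 * n - 1) * L ≤ 2 * (T - 1 - t)) :
    (L : ℚ) / ((T : ℚ) - 1 - (t : ℚ)) ≤ 1 / ((n : ℚ) - 1 / 2) := by
  have hq : ((2 * n - 1) * L : ℚ) ≤ 2 * ((T : ℚ) - 1 - t) := by
    have := (Nat.cast_le (α := ℚ)).2 h
    push_cast [Nat.cast_sub (show 1 ≤ 2 * n by omega), Nat.cast_sub (show 1 + t ≤ T by omega),
      Nat.sub_sub] at this
    linarith
  have hD : (0 : ℚ) < (T : ℚ) - 1 - t := by
    have : (t : ℚ) + 2 ≤ T := by exact_mod_cast (show t + 2 ≤ T by omega)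
    linarith
  have hn' : (0 : ℚ) < (n : ℚ) - 1 / 2 := by
    have : (1 : ℚ) ≤ n := by exact_mod_cast hn
    linarith
  rw [div_le_div_iff₀ hD hn']
  linarith

theorem tilted_gap_size_ratio_general (n T : ℕ) (hn : 1 ≤ n)
    (V : Set ℕ)
    (hV : V = {x : ℕ | x < T ∧ ∃ h j' : ℕ, j' ≤ 2 * n - 1 ∧
      (x : ℤ) = 2 ^ h * (((T / 2 ^ h : ℕ) : ℤ) - (j' : ℤ)) - 1})
    (B : Finset ℕ) (hVB : ∀ x ∈ V, x ∈ B) :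
    ∀ T', T' < T - 1 → ∀ i j : ℕ, i ≤ T' → T' + j ≤ T →
      (∀ x ∈ Finset.Ico (T' - i) (T' + j), x ∉ B) →
      (i + j : ℚ) / ((T : ℚ) - 1 - (T' : ℚ)) ≤ 1 / ((n : ℚ) - 1 / 2) ∧
      (2 * n - 1) * (i + j) ≤ 2 * (T - 1 - T') := by
  intro T' hT' i j hi hj hgap
  have hlen : T' + j - (T' - i) = i + j := by omega
  have hbound : (2 * n - 1) * (i + j) ≤ 2 * (T - 1 - T') := by
    rw [← hlen]
    refine two_mul_sub_one_mul_length_le_of_gap hj (Nat.le_add_right T' j) fun x hax hxb hxV => ?_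
    exact hgap x (Finset.mem_Ico.2 ⟨hax, hxb⟩) (hVB x (hV ▸ hxV))
  exact ⟨by exact_mod_cast div_le_one_div_sub_half_of_mul_le hn hT' hbound, hbound⟩

/-- tilted gap size ratio given last `n` items per hanoi value.
If `B` retains the most recent `2n` indices of each hanoi value before `T`,
then every gap `[T'−i, T'+j)` around any `T' < T − 1` satisfies
`(i+j)/(T−1−T') ≤ 1/(n − 1/2)`, equivalently `(2n−1)(i+j) ≤ 2(T−1−T')`. -/
theorem tilted_gap_size_ratio (n T : ℕ) (hn : 1 ≤ n) (hT : 2 ≤ T)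
    (V : Set ℕ)
    (hV : V = {x : ℕ | x < T ∧ ∃ h j' : ℕ, j' ≤ 2 * n - 1 ∧
      (x : ℤ) = 2 ^ h * (((T / 2 ^ h : ℕ) : ℤ) - (j' : ℤ)) - 1})
    (B : Finset ℕ) (hB : B ⊆ Finset.range T) (hVB : ∀ x ∈ V, x ∈ B) :
    ∀ T', T' < T - 1 → ∀ i j : ℕ, i ≤ T' → T' + j ≤ T →
      (∀ x ∈ Finset.Ico (T' - i) (T' + j), x ∉ B) →
      (i + j : ℚ) / ((T : ℚ) - 1 - (T' : ℚ)) ≤ 1 / ((n : ℚ) - 1 / 2) ∧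
      (2 * n - 1) * (i + j) ≤ 2 * (T - 1 - T') :=
  tilted_gap_size_ratio_general n T hn V hV B hVB
end

section
/- (Stretched algorithm gap size ratio upper bound, meta-epoch form.) Let ŝ, τ, T ∈ ℕ with ŝ ≥ 2 and τ ≤ ŝ − 1, and set n = 2^(ŝ−1−τ). Let W = {j·2^h − 1 : j, h ∈ ℕ, 1 ≤ j ≤ 2n}, and suppose B ⊆ {0,…,T−1} contains every element of W that is less than T (the retention guarantee of the stretched curation algorithm during meta-epoch τ). Then for every T̆ with 1 ≤ T̆ < T and all i, j ∈ ℕ with i ≤ T̆, T̆ + j ≤ T, and {T̆−i, …, T̆+j−1} ∩ B = ∅, we have, as rationals, (i + j)/T̆ ≤ 2^(τ+1)/2^ŝ. That is, cost_stretched(T) ≤ 2^(τ+1)/S for buffer size S = 2^ŝ. -/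
/-!
A gap `[a, b)` of length `L ≥ 2^h`, `h = ⌊log₂ L⌋`, contains a point `k·2^h − 1`, namely the one with
`k = ⌊a / 2^h⌋ + 1`. If all such points with `k ≤ 2n` are retained, this `k` exceeds `2n`, so the gap
starts at `a ≥ 2n·2^h > n·L`; hence `L / T̆ ≤ 1/n ≤ 2^(τ+1) / 2^ŝ`.
-/

theorem mul_le_of_Ico_disjoint {B : Finset ℕ} {N d a b : ℕ} (hd : 0 < d) (hab : a + d ≤ b)
    (hret : ∀ k, 1 ≤ k → k ≤ N → k * d - 1 < b → k * d - 1 ∈ B)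
    (hgap : ∀ x ∈ Finset.Ico a b, x ∉ B) : N * d ≤ a := by
  set q := a / d
  have hdiv : d * q + a % d = a := Nat.div_add_mod a d
  have hmod : a % d < d := Nat.mod_lt a hd
  have hsucc : (q + 1) * d = d * q + d := by ring
  have hmem : (q + 1) * d - 1 ∈ Finset.Ico a b := Finset.mem_Ico.mpr ⟨by omega, by omega⟩
  have hN : N ≤ q := by
    by_contra! hq
    exact hgap _ hmem (hret (q + 1) (Nat.le_add_left 1 q) hq (Finset.mem_Ico.mp hmem).2)
  calc N * d ≤ q * d := Nat.mul_le_mul_right d hN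
    _ = d * q := mul_comm q d
    _ ≤ a := by omega

theorem mul_sub_le_of_Ico_disjoint {B : Finset ℕ} {n a b : ℕ}
    (hret : ∀ k h, 1 ≤ k → k ≤ 2 * n → k * 2 ^ h - 1 < b → k * 2 ^ h - 1 ∈ B)
    (hgap : ∀ x ∈ Finset.Ico a b, x ∉ B) : n * (b - a) ≤ a := by
  rcases Nat.eq_zero_or_pos (b - a) with hL | hL
  · simp [hL]
  set h := Nat.log 2 (b - a)
  have hlow : 2 ^ h ≤ b - a := Nat.pow_log_le_self 2 hL.ne'
  have hhigh : b - a < 2 ^ (h + 1) := Nat.lt_pow_succ_log_self Nat.one_lt_two (b - a)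
  have hstart : 2 * n * 2 ^ h ≤ a :=
    mul_le_of_Ico_disjoint (Nat.two_pow_pos h) (by omega) (hret · h) hgap
  calc n * (b - a) ≤ n * 2 ^ (h + 1) := Nat.mul_le_mul_left n hhigh.le
    _ = 2 * n * 2 ^ h := by ring
    _ ≤ a := hstart

theorem one_div_two_pow_sub_le_two_pow_div (s τ : ℕ) :
    1 / (2 ^ (s - 1 - τ) : ℚ) ≤ 2 ^ (τ + 1) / 2 ^ s := by
  rw [div_le_div_iff₀ (by positivity) (by positivity), one_mul, ← pow_add]
  exact pow_le_pow_right₀ one_le_two (by omega)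

theorem stretched_cost_upper_bound_general (s' τ T n : ℕ)
    (hn : n = 2 ^ (s' - 1 - τ))
    (B : Finset ℕ)
    (hret : ∀ x : ℕ,
      (∃ j h : ℕ, 1 ≤ j ∧ j ≤ 2 * n ∧ x = j * 2 ^ h - 1) → x < T → x ∈ B) :
    ∀ T', 1 ≤ T' → T' < T → ∀ i j : ℕ, i ≤ T' → T' + j ≤ T →
      (∀ x ∈ Finset.Ico (T' - i) (T' + j), x ∉ B) →
      (i + j : ℚ) / (T' : ℚ) ≤ (2 : ℚ) ^ (τ + 1) / (2 : ℚ) ^ s' := by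
  intro T' hT' _ i j hi hj hgap
  have hlen : n * (i + j) ≤ T' := by
    have := mul_sub_le_of_Ico_disjoint
      (fun k h hk1 hk2 hlt => hret _ ⟨k, h, hk1, hk2, rfl⟩ (by omega)) hgap
    rw [show T' + j - (T' - i) = i + j by omega] at this
    exact this.trans (Nat.sub_le T' i)
  have hnpos : (0 : ℚ) < n := by rw [hn]; positivity
  calc (i + j : ℚ) / T' ≤ 1 / n := by
        rw [div_le_div_iff₀ (by exact_mod_cast hT') hnpos, one_mul, mul_comm]
        exact_mod_cast hlen
    _ ≤ 2 ^ (τ + 1) / 2 ^ s' := by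
        rw [hn, Nat.cast_pow, Nat.cast_ofNat]
        exact one_div_two_pow_sub_le_two_pow_div s' τ

/-- stretched algorithm gap size ratio upper bound, meta-epoch
form. With `n = 2^(s'−1−τ)` items retained per hanoi value (the first
`j·2^h − 1 < T` with `1 ≤ j ≤ 2n`), every gap `[T'−i, T'+j)` around any
`1 ≤ T' < T` satisfies `(i+j)/T' ≤ 2^(τ+1)/2^s'` as rationals. -/
theorem stretched_cost_upper_bound (s' τ T n : ℕ) (hs' : 2 ≤ s') (hτ : τ ≤ s' - 1)
    (hn : n = 2 ^ (s' - 1 - τ))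
    (B : Finset ℕ) (hB : B ⊆ Finset.range T)
    (hret : ∀ x : ℕ,
      (∃ j h : ℕ, 1 ≤ j ∧ j ≤ 2 * n ∧ x = j * 2 ^ h - 1) → x < T → x ∈ B) :
    ∀ T', 1 ≤ T' → T' < T → ∀ i j : ℕ, i ≤ T' → T' + j ≤ T →
      (∀ x ∈ Finset.Ico (T' - i) (T' + j), x ∉ B) →
      (i + j : ℚ) / (T' : ℚ) ≤ (2 : ℚ) ^ (τ + 1) / (2 : ℚ) ^ s' :=
  stretched_cost_upper_bound_general s' τ T n hn B hret
end

section
/- (Tilted algorithm gap size ratio upper bound, meta-epoch form.) Let ŝ, τ, T ∈ ℕ with ŝ ≥ 2, τ ≤ ŝ − 1, and T ≥ 2, and set n = 2^(ŝ−1−τ). Let V = {x ∈ ℕ : x < T and there exist h ∈ ℕ and j' ∈ ℕ with j' ≤ 2n−1 such that (x : ℤ) = 2^h·(⌊T/2^h⌋ − j') − 1}, and suppose B ⊆ {0,…,T−1} contains V (the retention guarantee of the tilted curation algorithm during meta-epoch τ). Then for every T̆ with T̆ < T − 1 and all i, j ∈ ℕ with i ≤ T̆, T̆ + j ≤ T,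 and {T̆−i, …, T̆+j−1} ∩ B = ∅, we have, as rationals, (i + j)/(T − 1 − T̆) ≤ 1/(2^(ŝ−1−τ) − 1/2) = 2^(τ+1)/(2^ŝ − 2^τ). That is, cost_tilted(T) ≤ 1/(S/2^(τ+1) − 1/2) for buffer size S = 2^ŝ. -/
/-!
A gap `[a, b)` of length `g` with `2^h ≤ g < 2^(h+1)` contains the point `2^h·k − 1`,
`k = ⌊b / 2^h⌋`, whose hanoi value is at least `h`. Since it was not retained, it is not
among the `2n` most recent such points, so at least `2n` multiples of `2^h` lie in `(b, T]`
above `2^h·k`. Hence the distance from the gap to the present is at least `(2n − 1)·2^h`,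
which exceeds `(n − 1/2)·g`.
-/

theorem Nat.mul_div_sub_one_mem_Ico {a b d : ℕ} (hd : 0 < d) (hdg : d ≤ b - a) :
    d * (b / d) - 1 ∈ Set.Ico a b := by
  have hlt : b < d * (b / d + 1) := Nat.lt_mul_div_succ b hd
  have hle : d * (b / d) ≤ b := Nat.mul_div_le b d
  have hpos : 0 < d * (b / d) := Nat.mul_pos hd (Nat.div_pos (by omega) hd)
  constructor <;> rw [Nat.mul_add_one] at hlt <;> omega

theorem mem_recent_of_two_pow_mul {T n h k : ℕ} (hk : 0 < k) (hkT : 2 ^ h * k ≤ T)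
    (hrecent : T / 2 ^ h < k + 2 * n) :
    2 ^ h * k - 1 ∈ {x : ℕ | x < T ∧ ∃ h j' : ℕ, j' ≤ 2 * n - 1 ∧
      (x : ℤ) = 2 ^ h * (((T / 2 ^ h : ℕ) : ℤ) - (j' : ℤ)) - 1} := by
  have hpos : 0 < 2 ^ h * k := Nat.mul_pos (Nat.two_pow_pos h) hk
  have hkle : k ≤ T / 2 ^ h := (Nat.le_div_iff_mul_le (Nat.two_pow_pos h)).2 (by linarith)
  refine ⟨by omega, h, T / 2 ^ h - k, by omega, ?_⟩
  push_cast [Nat.one_le_iff_ne_zero.2 hpos.ne', hkle]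
  ring

theorem two_mul_sub_one_mul_gap_le {T n a b : ℕ} {B : Set ℕ}
    (hB : ∀ h k, 0 < k → 2 ^ h * k ≤ T → T / 2 ^ h < k + 2 * n → 2 ^ h * k - 1 ∈ B)
    (hgap : ∀ x ∈ Set.Ico a b, x ∉ B) (hbT : b ≤ T) :
    (2 * n - 1) * (b - a) ≤ 2 * (T - 1 - b) := by
  rcases Nat.eq_zero_or_pos (b - a) with hg | hg
  · simp [hg]
  set d := 2 ^ Nat.log 2 (b - a)
  have hdpos : 0 < d := Nat.two_pow_pos _
  have hdg : d ≤ b - a := Nat.pow_log_le_self 2 hg.ne'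
  have hgd : b - a < 2 * d := by
    have := Nat.lt_pow_succ_log_self one_lt_two (b - a)
    rwa [Nat.pow_succ, mul_comm] at this
  have hmem := Nat.mul_div_sub_one_mem_Ico hdpos hdg
  have hk : 0 < b / d := Nat.div_pos (by omega) hdpos
  have hkb : d * (b / d) ≤ b := Nat.mul_div_le b d
  have hbk : b < d * (b / d) + d := by
    have := Nat.lt_mul_div_succ b hdpos
    rwa [Nat.mul_add_one] at this
  have hold : (b / d + 2 * n) * d ≤ T := by
    rw [← Nat.le_div_iff_mul_le hdpos]
    by_contra! hrecent
    exact hgap _ hmem (hB _ _ hk (hkb.trans hbT) hrecent)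
  have hdist : (2 * n - 1) * d ≤ T - 1 - b := by
    rcases Nat.eq_zero_or_pos n with rfl | hn
    · simp
    have : (2 * n - 1) * d + d = 2 * n * d := by
      rw [← Nat.succ_mul, Nat.succ_eq_add_one, Nat.sub_add_cancel (by omega)]
    rw [add_mul, mul_comm (b / d)] at hold
    omega
  calc (2 * n - 1) * (b - a) ≤ (2 * n - 1) * (2 * d) := Nat.mul_le_mul_left _ hgd.le
    _ = 2 * ((2 * n - 1) * d) := by ring
    _ ≤ 2 * (T - 1 - b) := Nat.mul_le_mul_left _ hdist

theorem div_le_one_div_sub_half {K : Type*} [Field K] [LinearOrder K] [IsStrictOrderedRing K]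
    {n g D : ℕ} (hn : 1 ≤ n) (hD : 0 < D) (h : (2 * n - 1) * g ≤ 2 * D) :
    (g : K) / D ≤ 1 / (n - 1 / 2) := by
  have hnK : (1 : K) ≤ n := by exact_mod_cast hn
  rw [div_le_div_iff₀ (by exact_mod_cast hD) (by linarith)]
  have hK : ((2 * n - 1 : ℕ) : K) * g ≤ 2 * D := by exact_mod_cast h
  push_cast [show 1 ≤ 2 * n by omega] at hK
  linarith

theorem one_div_two_pow_sub_half {K : Type*} [Field K] [LinearOrder K] [IsStrictOrderedRing K]
    (m τ : ℕ) :
    (1 : K) / (2 ^ m - 1 / 2) = 2 ^ (τ + 1) / (2 ^ (m + τ + 1) - 2 ^ τ) := by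
  have h1 : (1 : K) ≤ 2 ^ m := one_le_pow₀ one_le_two
  have h2 : (0 : K) < 2 ^ τ := pow_pos two_pos τ
  have hden : (2 : K) ^ (m + τ + 1) - 2 ^ τ ≠ 0 := by
    rw [pow_add, pow_add]
    nlinarith
  rw [div_eq_div_iff (by linarith) hden]
  ring

theorem tilted_cost_upper_bound_general (s' τ T n : ℕ) (hs' : 2 ≤ s') (hτ : τ ≤ s' - 1)
    (hn : n = 2 ^ (s' - 1 - τ))
    (V : Set ℕ)
    (hV : V = {x : ℕ | x < T ∧ ∃ h j' : ℕ, j' ≤ 2 * n - 1 ∧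
      (x : ℤ) = 2 ^ h * (((T / 2 ^ h : ℕ) : ℤ) - (j' : ℤ)) - 1})
    (B : Finset ℕ) (hVB : ∀ x ∈ V, x ∈ B) :
    ∀ T', T' < T - 1 → ∀ i j : ℕ, i ≤ T' → T' + j ≤ T →
      (∀ x ∈ Finset.Ico (T' - i) (T' + j), x ∉ B) →
      (i + j : ℚ) / ((T : ℚ) - 1 - (T' : ℚ)) ≤
        1 / ((2 : ℚ) ^ (s' - 1 - τ) - 1 / 2) ∧
      (1 : ℚ) / ((2 : ℚ) ^ (s' - 1 - τ) - 1 / 2) =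
        (2 : ℚ) ^ (τ + 1) / ((2 : ℚ) ^ s' - (2 : ℚ) ^ τ) := by
  intro T' hT' i j hi hj hgap
  have hlen := two_mul_sub_one_mul_gap_le (B := (B : Set ℕ))
    (fun h k hk hkT hrec => hVB _ (hV ▸ mem_recent_of_two_pow_mul hk hkT hrec))
    (fun x hx => hgap x (Finset.mem_Ico.2 hx)) hj
  have hbound : (2 * n - 1) * (i + j) ≤ 2 * (T - 1 - T') := by
    rw [show T' + j - (T' - i) = i + j by omega] at hlen
    omega
  constructor
  · have := div_le_one_div_sub_half (K := ℚ) (g := i + j) (D := T - 1 - T')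
      (hn ▸ Nat.one_le_two_pow) (by omega) hbound
    push_cast [show T' ≤ T - 1 by omega, show 1 ≤ T by omega, hn] at this
    exact this
  · rw [one_div_two_pow_sub_half (s' - 1 - τ) τ, show s' - 1 - τ + τ + 1 = s' by omega]

/-- tilted algorithm gap size ratio upper bound, meta-epoch
form. With `n = 2^(s'−1−τ)` and the most recent `2n` indices of each hanoi
value retained, every gap `[T'−i, T'+j)` around any `T' < T − 1` satisfies
`(i+j)/(T−1−T') ≤ 1/(2^(s'−1−τ) − 1/2) = 2^(τ+1)/(2^s' − 2^τ)` as rationals. -/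
theorem tilted_cost_upper_bound (s' τ T n : ℕ) (hs' : 2 ≤ s') (hτ : τ ≤ s' - 1)
    (hT : 2 ≤ T) (hn : n = 2 ^ (s' - 1 - τ))
    (V : Set ℕ)
    (hV : V = {x : ℕ | x < T ∧ ∃ h j' : ℕ, j' ≤ 2 * n - 1 ∧
      (x : ℤ) = 2 ^ h * (((T / 2 ^ h : ℕ) : ℤ) - (j' : ℤ)) - 1})
    (B : Finset ℕ) (hB : B ⊆ Finset.range T) (hVB : ∀ x ∈ V, x ∈ B) :
    ∀ T', T' < T - 1 → ∀ i j : ℕ, i ≤ T' → T' + j ≤ T →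
      (∀ x ∈ Finset.Ico (T' - i) (T' + j), x ∉ B) →
      (i + j : ℚ) / ((T : ℚ) - 1 - (T' : ℚ)) ≤
        1 / ((2 : ℚ) ^ (s' - 1 - τ) - 1 / 2) ∧
      (1 : ℚ) / ((2 : ℚ) ^ (s' - 1 - τ) - 1 / 2) =
        (2 : ℚ) ^ (τ + 1) / ((2 : ℚ) ^ s' - (2 : ℚ) ^ τ) :=
  tilted_cost_upper_bound_general s' τ T n hs' hτ hn V hV B hVB
end
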